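/- Consider two agents with additive valuations over two goods {a,b}: v1(a)=90, v1(b)=10, v2(a)=55, v2(b)=45. The distribution F assigning probability 10/11 to ({a},{b}) and 1/11 to (∅,{a,b}) is ex-ante proportional, and its sum of standard deviations √((10/121)·90²) + √((10/121)·55²) is strictly less than 42, while the uniform distribution over ({a},{b}) and ({b},{a}) has sum of standard deviations √(80²/4) + √(10²/4) = 45. Hence the uniform 'fair' distribution does not minimize the sum of standard deviations among ex-ante proportional distributions. -/
import Mathlib


/-- The two agents' valuations: v1 = (90, 10), v2 = (55, 45) on goods (a, b). -/
def vs14 : Fin 2 → Fin 2 → ℝ := ![![90, 10], ![55, 45]]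

/-- Value of agent `i`'s bundle in allocation `A` (good `g` goes to agent `A g`). -/
def val14 (i : Fin 2) (A : Fin 2 → Fin 2) : ℝ := ∑ g, if A g = i then vs14 i g else 0

/-- Ex-ante proportional probability distribution over the four allocations. -/
def IsPropDist14 (p : (Fin 2 → Fin 2) → ℝ) : Prop :=
  (∀ A, 0 ≤ p A) ∧ (∑ A : Fin 2 → Fin 2, p A = 1) ∧
    ∀ i : Fin 2, 50 ≤ ∑ A : Fin 2 → Fin 2, p A * val14 i A

/-- Variance of agent `i`'s value under distribution `p`. -/
noncomputable def varAg14 (p : (Fin 2 → Fin 2) → ℝ) (i : Fin 2) : ℝ :=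
  ∑ A : Fin 2 → Fin 2, p A * (val14 i A - ∑ B : Fin 2 → Fin 2, p B * val14 i B) ^ 2

/-- Sum of the agents' standard deviations under distribution `p`. -/
noncomputable def sumStd14 (p : (Fin 2 → Fin 2) → ℝ) : ℝ :=
  Real.sqrt (varAg14 p 0) + Real.sqrt (varAg14 p 1)

/-- `F`: probability 10/11 on ({a},{b}) (value vector (90,45)) and 1/11 on (∅,{a,b}). -/
noncomputable def F14 : (Fin 2 → Fin 2) → ℝ := fun A =>
  if A = ![0, 1] then 10 / 11 else if A = ![1, 1] then 1 / 11 else 0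

/-- Uniform distribution over ({a},{b}) ((90,45)) and ({b},{a}) ((10,55)). -/
noncomputable def G14 : (Fin 2 → Fin 2) → ℝ := fun A =>
  if A = ![0, 1] then 1 / 2 else if A = ![1, 0] then 1 / 2 else 0

lemma sum4 (f : (Fin 2 → Fin 2) → ℝ) :
    ∑ A : Fin 2 → Fin 2, f A = f ![0,0] + f ![0,1] + f ![1,0] + f ![1,1] := by
  rw [← Equiv.sum_comp (piFinTwoEquiv fun _ => Fin 2).symm]
  have h : ∀ x y : Fin 2, (Fin.cons x (Fin.cons y finZeroElim) : Fin 2 → Fin 2) = ![x,y] := by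
    intro x y; funext i; fin_cases i <;> rfl
  simp [Fintype.sum_prod_type, Fin.sum_univ_two, piFinTwoEquiv, h]
  ring

/-- `F` is ex-ante proportional with sum of standard deviations
√((10/121)·90²) + √((10/121)·55²) < 42, while the uniform distribution `G` has sum of
standard deviations √(80²/4) + √(10²/4) = 45; hence `G` does not minimize the sum of
standard deviations among ex-ante proportional distributions. -/
theorem uniform_not_sumStd_minimizer :
    IsPropDist14 F14 ∧
    (sumStd14 F14 = Real.sqrt ((10 / 121) * 90 ^ 2) + Real.sqrt ((10 / 121) * 55 ^ 2)) ∧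
    (sumStd14 F14 < 42) ∧
    (sumStd14 G14 = Real.sqrt (80 ^ 2 / 4) + Real.sqrt (10 ^ 2 / 4)) ∧
    (sumStd14 G14 = 45) ∧
    ¬ (∀ q : (Fin 2 → Fin 2) → ℝ, IsPropDist14 q → sumStd14 G14 ≤ sumStd14 q) := by
  have hF0 : varAg14 F14 0 = (10 / 121) * 90 ^ 2 := by
    simp only [varAg14, sum4]
    norm_num [F14, val14, vs14, Fin.sum_univ_two, funext_iff, Fin.forall_fin_two]
  have hF1 : varAg14 F14 1 = (10 / 121) * 55 ^ 2 := by
    simp only [varAg14, sum4]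
    norm_num [F14, val14, vs14, Fin.sum_univ_two, funext_iff, Fin.forall_fin_two]
  have hG0 : varAg14 G14 0 = 80 ^ 2 / 4 := by
    simp only [varAg14, sum4]
    norm_num [G14, val14, vs14, Fin.sum_univ_two, funext_iff, Fin.forall_fin_two]
  have hG1 : varAg14 G14 1 = 10 ^ 2 / 4 := by
    simp only [varAg14, sum4]
    norm_num [G14, val14, vs14, Fin.sum_univ_two, funext_iff, Fin.forall_fin_two]
  have hFeq : sumStd14 F14 = Real.sqrt ((10 / 121) * 90 ^ 2) + Real.sqrt ((10 / 121) * 55 ^ 2) := by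
    rw [sumStd14, hF0, hF1]
  have hGeq : sumStd14 G14 = Real.sqrt (80 ^ 2 / 4) + Real.sqrt (10 ^ 2 / 4) := by
    rw [sumStd14, hG0, hG1]
  have hG45 : sumStd14 G14 = 45 := by
    rw [hGeq, show ((80:ℝ) ^ 2 / 4) = 40 ^ 2 by norm_num,
      show ((10:ℝ) ^ 2 / 4) = 5 ^ 2 by norm_num,
      Real.sqrt_sq (by norm_num : (0:ℝ) ≤ 40), Real.sqrt_sq (by norm_num : (0:ℝ) ≤ 5)]
    norm_num
  have hFlt : sumStd14 F14 < 42 := by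
    rw [hFeq]
    have h1 : Real.sqrt ((10 / 121) * 90 ^ 2) ^ 2 = (10 / 121) * 90 ^ 2 :=
      Real.sq_sqrt (by norm_num)
    have h2 : Real.sqrt ((10 / 121) * 55 ^ 2) ^ 2 = (10 / 121) * 55 ^ 2 :=
      Real.sq_sqrt (by norm_num)
    have h3 := Real.sqrt_nonneg ((10 / 121) * 90 ^ 2)
    have h4 := Real.sqrt_nonneg ((10 / 121) * 55 ^ 2)
    nlinarith [sq_nonneg (Real.sqrt ((10 / 121) * 90 ^ 2) - 2588 / 100),
      sq_nonneg (Real.sqrt ((10 / 121) * 55 ^ 2) - 1581 / 100)]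
  have hprop : IsPropDist14 F14 := by
    refine ⟨?_, ?_, ?_⟩
    · intro A
      unfold F14
      split
      · norm_num
      · split <;> norm_num
    · rw [sum4]
      norm_num [F14, funext_iff, Fin.forall_fin_two]
    · rw [Fin.forall_fin_two]
      constructor <;>
      · rw [sum4]
        norm_num [F14, val14, vs14, Fin.sum_univ_two, funext_iff, Fin.forall_fin_two]
  exact ⟨hprop, hFeq, hFlt, hGeq, hG45, fun h => absurd (h F14 hprop) (by rw [hG45]; linarith)⟩
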